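/- Let β_b := (6/b³)·(Φ(√2·z_b)/√π − b·φ(z_b)) with z_b = Φ⁻¹(b). Then lim_{b→0⁺} β_b·b·z_b = −3; equivalently β_b ≈ −3/(b·z_b) as b → 0⁺, and in particular β_b·b → 0 as b → 0⁺. -/

import Mathlib

/-! With `R = Φ/φ` the Mills ratio and `φ(√2 z) = √(2π) φ(z)²`, the quantity `β_b · b · z_b`
equals `6 z (√2 R(√2 z) - R(z)) / R(z)²` at `z = z_b`. The leading terms of `R(z) ≈ -1/z` cancel
in the numerator, so the second-order tail expansion is needed: comparing derivatives gives
`φ (-1/z + 1/z³) ≤ Φ ≤ φ (-1/z + 1/z³ - 3/z⁵)` for `z < 0`, i.e. `E(z) := z³ R(z) + z² → 1`.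
In terms of `E` the quantity is `6 (E(√2 z)/2 - E(z)) / (E(z)/z² - 1)²`, which tends to `-3`. -/

open Real MeasureTheory Filter

noncomputable def phi (z : ℝ) : ℝ := (Real.sqrt (2 * Real.pi))⁻¹ * Real.exp (-z ^ 2 / 2)

noncomputable def Phi (z : ℝ) : ℝ := ∫ s in Set.Iic z, phi s

open Set Topology ProbabilityTheory

lemma phi_eq_gaussianPDFReal : phi = gaussianPDFReal 0 1 := by
  ext z
  simp [phi, gaussianPDFReal]

lemma phi_pos (z : ℝ) : 0 < phi z := by
  unfold phi
  positivity

lemma integrable_phi : Integrable phi :=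
  phi_eq_gaussianPDFReal ▸ integrable_gaussianPDFReal 0 1

lemma continuous_phi : Continuous phi := by
  unfold phi
  fun_prop

lemma tendsto_phi_atBot : Tendsto phi atBot (𝓝 0) := by
  have hsq : Tendsto (fun z : ℝ => z ^ 2) atBot atTop := by
    simpa only [Function.comp_def, neg_sq] using
      (tendsto_pow_atTop two_ne_zero).comp (tendsto_neg_atBot_atTop (G := ℝ))
  have hexp := tendsto_exp_atBot.comp
    ((tendsto_neg_atTop_atBot.comp hsq).atBot_div_const (two_pos : (0 : ℝ) < 2))
  unfold phi
  simpa only [Function.comp_def, mul_zero] using hexp.const_mul (√(2 * π))⁻¹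

lemma hasDerivAt_phi (z : ℝ) : HasDerivAt phi (-z * phi z) z := by
  have h : HasDerivAt (fun z : ℝ => -z ^ 2 / 2) (-z) z := by
    simpa using (((hasDerivAt_pow 2 z).neg).div_const 2).congr_deriv (by ring)
  unfold phi
  exact (h.exp.const_mul _).congr_deriv (by ring)

lemma phi_sqrt_two_mul (z : ℝ) : phi (√2 * z) = √(2 * π) * phi z ^ 2 := by
  have hexp : exp (-(√2 * z) ^ 2 / 2) = exp (-z ^ 2 / 2) ^ 2 := by
    rw [← exp_nat_mul, mul_pow, sq_sqrt zero_le_two]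
    ring_nf
  unfold phi
  rw [hexp]
  field_simp

lemma Phi_nonneg (z : ℝ) : 0 ≤ Phi z :=
  setIntegral_nonneg measurableSet_Iic fun s _ => (phi_pos s).le

lemma tendsto_Phi_atBot : Tendsto Phi atBot (𝓝 0) :=
  tendsto_integral_Iic_zero tendsto_id

lemma hasDerivAt_Phi (z : ℝ) : HasDerivAt Phi (phi z) z := by
  have hPhi : (fun w => Phi 0 + ∫ s in (0 : ℝ)..w, phi s) = Phi := by
    ext w
    rw [Phi, Phi, ← intervalIntegral.integral_Iic_sub_Iic integrable_phi.integrableOn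
      integrable_phi.integrableOn]
    ring
  rw [← hPhi]
  exact (intervalIntegral.integral_hasDerivAt_right integrable_phi.intervalIntegrable
    (continuous_phi.stronglyMeasurableAtFilter _ _) continuous_phi.continuousAt).const_add _

lemma strictMono_Phi : StrictMono Phi :=
  strictMono_of_hasDerivAt_pos hasDerivAt_Phi phi_pos

lemma Phi_pos (z : ℝ) : 0 < Phi z :=
  (Phi_nonneg (z - 1)).trans_lt (strictMono_Phi (sub_one_lt z))

lemma nonneg_of_hasDerivAt_nonneg_of_tendsto_atBot {f f' : ℝ → ℝ} {a x : ℝ}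
    (hf : ∀ y < a, HasDerivAt f (f' y) y) (hf' : ∀ y < a, 0 ≤ f' y)
    (hlim : Tendsto f atBot (𝓝 0)) (hx : x < a) : 0 ≤ f x := by
  have hmono : MonotoneOn f (Iio a) :=
    monotoneOn_of_hasDerivWithinAt_nonneg (convex_Iio a)
      (fun y hy => (hf y hy).continuousAt.continuousWithinAt)
      (fun y hy => (hf y (by rwa [interior_Iio] at hy)).hasDerivWithinAt)
      (fun y hy => hf' y (by rwa [interior_Iio] at hy))
  refine le_of_tendsto hlim ?_
  filter_upwards [eventually_le_atBot x] with y hy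
  exact hmono (hy.trans_lt hx) hx hy

lemma hasDerivAt_phi_mul {p : ℝ → ℝ} {p' z : ℝ} (hp : HasDerivAt p p' z) :
    HasDerivAt (fun z => phi z * p z) (phi z * (p' - z * p z)) z :=
  ((hasDerivAt_phi z).mul hp).congr_deriv (by ring)

lemma tendsto_phi_mul_atBot {p : ℝ → ℝ} (hp : Tendsto p atBot (𝓝 0)) :
    Tendsto (fun z => phi z * p z) atBot (𝓝 0) := by
  have := tendsto_phi_atBot.mul hp
  rwa [mul_zero] at this

lemma tendsto_inv_pow_atBot (n : ℕ) (hn : n ≠ 0) :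
    Tendsto (fun z : ℝ => z⁻¹ ^ n) atBot (𝓝 0) := by
  simpa [zero_pow hn] using (tendsto_inv_atBot_zero (𝕜 := ℝ)).pow n

lemma phi_mul_le_Phi {z : ℝ} (hz : z < 0) : phi z * (-z⁻¹ + z⁻¹ ^ 3) ≤ Phi z := by
  have hp : ∀ y < (0 : ℝ), HasDerivAt (fun y => -y⁻¹ + y⁻¹ ^ 3) (y⁻¹ ^ 2 - 3 * y⁻¹ ^ 4) y :=
    fun y hy => by
      have hy0 := hy.ne
      have hinv := hasDerivAt_inv hy0
      exact (hinv.neg.add (hinv.pow 3)).congr_deriv (by simp only [inv_pow]; field_simp; ring)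
  have hlim : Tendsto (fun y : ℝ => -y⁻¹ + y⁻¹ ^ 3) atBot (𝓝 0) := by
    simpa using (tendsto_inv_pow_atBot 1 one_ne_zero).neg.add
      (tendsto_inv_pow_atBot 3 three_ne_zero)
  have := nonneg_of_hasDerivAt_nonneg_of_tendsto_atBot
    (f := fun y => Phi y - phi y * (-y⁻¹ + y⁻¹ ^ 3)) (f' := fun y => 3 * phi y * y⁻¹ ^ 4)
    (fun y hy => by
      have hy0 := hy.ne
      exact ((hasDerivAt_Phi y).sub (hasDerivAt_phi_mul (hp y hy))).congr_deriv
        (by simp only [inv_pow]; field_simp; ring))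
    (fun y _ => by have := phi_pos y; positivity)
    (by simpa using tendsto_Phi_atBot.sub (tendsto_phi_mul_atBot hlim)) hz
  linarith

lemma Phi_le_phi_mul {z : ℝ} (hz : z < 0) :
    Phi z ≤ phi z * (-z⁻¹ + z⁻¹ ^ 3 - 3 * z⁻¹ ^ 5) := by
  have hp : ∀ y < (0 : ℝ), HasDerivAt (fun y => -y⁻¹ + y⁻¹ ^ 3 - 3 * y⁻¹ ^ 5)
      (y⁻¹ ^ 2 - 3 * y⁻¹ ^ 4 + 15 * y⁻¹ ^ 6) y :=
    fun y hy => by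
      have hy0 := hy.ne
      have hinv := hasDerivAt_inv hy0
      exact ((hinv.neg.add (hinv.pow 3)).sub ((hinv.pow 5).const_mul 3)).congr_deriv
        (by simp only [inv_pow]; field_simp; ring)
  have hlim : Tendsto (fun y : ℝ => -y⁻¹ + y⁻¹ ^ 3 - 3 * y⁻¹ ^ 5) atBot (𝓝 0) := by
    simpa using ((tendsto_inv_pow_atBot 1 one_ne_zero).neg.add
      (tendsto_inv_pow_atBot 3 three_ne_zero)).sub
      ((tendsto_inv_pow_atBot 5 (by norm_num)).const_mul 3)
  have := nonneg_of_hasDerivAt_nonneg_of_tendsto_atBot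
    (f := fun y => phi y * (-y⁻¹ + y⁻¹ ^ 3 - 3 * y⁻¹ ^ 5) - Phi y)
    (f' := fun y => 15 * phi y * y⁻¹ ^ 6)
    (fun y hy => by
      have hy0 := hy.ne
      exact ((hasDerivAt_phi_mul (hp y hy)).sub (hasDerivAt_Phi y)).congr_deriv
        (by simp only [inv_pow]; field_simp; ring))
    (fun y _ => by have := phi_pos y; positivity)
    (by simpa using (tendsto_phi_mul_atBot hlim).sub tendsto_Phi_atBot) hz
  linarith

lemma tendsto_cube_mul_Phi_div_phi_add_sq :
    Tendsto (fun z => z ^ 3 * (Phi z / phi z) + z ^ 2) atBot (𝓝 1) := by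
  have hlower : Tendsto (fun z : ℝ => 1 - 3 * z⁻¹ ^ 2) atBot (𝓝 1) := by
    simpa using ((tendsto_inv_pow_atBot 2 two_ne_zero).const_mul 3).const_sub 1
  refine tendsto_of_tendsto_of_tendsto_of_le_of_le' hlower tendsto_const_nhds ?_ ?_
  all_goals filter_upwards [eventually_lt_atBot 0] with z hz
  all_goals have hz0 := hz.ne; have hz3 : z ^ 3 ≤ 0 := Odd.pow_nonpos (by decide) hz.le
  · have h := mul_le_mul_of_nonpos_left
      ((div_le_iff₀ (phi_pos z)).2 ((Phi_le_phi_mul hz).trans_eq (mul_comm _ _))) hz3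
    calc 1 - 3 * z⁻¹ ^ 2 = z ^ 3 * (-z⁻¹ + z⁻¹ ^ 3 - 3 * z⁻¹ ^ 5) + z ^ 2 := by
          simp only [inv_pow]; field_simp; ring
      _ ≤ z ^ 3 * (Phi z / phi z) + z ^ 2 := by linarith
  · have h := mul_le_mul_of_nonpos_left
      ((le_div_iff₀ (phi_pos z)).2 ((mul_comm _ _).trans_le (phi_mul_le_Phi hz))) hz3
    calc z ^ 3 * (Phi z / phi z) + z ^ 2 ≤ z ^ 3 * (-z⁻¹ + z⁻¹ ^ 3) + z ^ 2 := by linarith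
      _ = 1 := by simp only [inv_pow]; field_simp; ring

lemma tendsto_Phi_sqrt_two_mul_sub_Phi_mul_phi_atBot :
    Tendsto (fun z => 6 * z * (Phi (√2 * z) / √π - Phi z * phi z) / Phi z ^ 2)
      atBot (𝓝 (-3)) := by
  set E : ℝ → ℝ := fun z => z ^ 3 * (Phi z / phi z) + z ^ 2 with hE_def
  have hE : Tendsto E atBot (𝓝 1) := tendsto_cube_mul_Phi_div_phi_add_sq
  have hE2 : Tendsto (fun z => E (√2 * z)) atBot (𝓝 1) :=
    hE.comp (tendsto_id.const_mul_atBot (by positivity))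
  have hlim : Tendsto (fun z => 6 * (E (√2 * z) / 2 - E z) / (E z * z⁻¹ ^ 2 - 1) ^ 2) atBot
      (𝓝 (6 * (1 / 2 - 1) / (1 * 0 - 1) ^ 2)) :=
    (((hE2.div_const 2).sub hE).const_mul 6).div
      (((hE.mul (tendsto_inv_pow_atBot 2 two_ne_zero)).sub_const 1).pow 2) (by norm_num)
  norm_num at hlim
  refine hlim.congr' ?_
  filter_upwards [eventually_lt_atBot 0] with z hz
  have hz0 := hz.ne
  have hphi := (phi_pos z).ne'
  have hPhi := (Phi_pos z).ne'
  have hs2 : √2 ^ 2 = 2 := sq_sqrt zero_le_two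
  simp only [hE_def, phi_sqrt_two_mul, sqrt_mul zero_le_two]
  field_simp
  rw [hs2]
  ring

lemma tendsto_atBot_of_rightInvOn_Phi (Φinv : ℝ → ℝ)
    (hinv : ∀ y ∈ Ioo (0 : ℝ) 1, Phi (Φinv y) = y) : Tendsto Φinv (𝓝[>] 0) atBot := by
  refine tendsto_atBot.2 fun M => ?_
  filter_upwards [Ioo_mem_nhdsGT (lt_min (Phi_pos M) one_pos)] with y hy
  have hy1 : y ∈ Ioo (0 : ℝ) 1 := ⟨hy.1, hy.2.trans_le (min_le_right _ _)⟩
  refine (strictMono_Phi.lt_iff_lt.1 ?_).le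
  rw [hinv y hy1]
  exact hy.2.trans_le (min_le_left _ _)

theorem singular_gradient_asymptotic (Φinv : ℝ → ℝ)
    (hinv : ∀ y ∈ Set.Ioo (0 : ℝ) 1, Phi (Φinv y) = y) :
    Tendsto (fun b : ℝ =>
        ((6 / b ^ 3) * (Phi (Real.sqrt 2 * Φinv b) / Real.sqrt Real.pi - b * phi (Φinv b))) *
          b * Φinv b)
      (nhdsWithin 0 (Set.Ioi 0)) (nhds (-3)) ∧
    Tendsto (fun b : ℝ =>
        ((6 / b ^ 3) * (Phi (Real.sqrt 2 * Φinv b) / Real.sqrt Real.pi - b * phi (Φinv b))) * b)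
      (nhdsWithin 0 (Set.Ioi 0)) (nhds 0) := by
  have hz := tendsto_atBot_of_rightInvOn_Phi Φinv hinv
  have hmain : Tendsto (fun b : ℝ =>
      ((6 / b ^ 3) * (Phi (√2 * Φinv b) / √π - b * phi (Φinv b))) * b * Φinv b)
      (𝓝[>] 0) (𝓝 (-3)) := by
    refine (tendsto_Phi_sqrt_two_mul_sub_Phi_mul_phi_atBot.comp hz).congr' ?_
    filter_upwards [Ioo_mem_nhdsGT one_pos] with b hb
    have hb0 := hb.1.ne'
    simp only [Function.comp_apply, hinv b hb]
    field_simp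
  refine ⟨hmain, ?_⟩
  have hprod := hmain.mul (tendsto_inv_atBot_zero.comp hz)
  rw [mul_zero] at hprod
  refine hprod.congr' ?_
  filter_upwards [hz.eventually (eventually_lt_atBot 0)] with b hb
  have hb0 := hb.ne
  simp only [Function.comp_apply]
  field_simp
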